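/- If the system has a GED on J with data (K, λ₊, λ₋, P_n^±) and also a GED on J with data (K̃, λ₊, λ₋, P̃_n^±) with the same rates, then for all n ∈ J: ‖P_n^+ − P̃_n^+‖ ≤ K² (λ₊/λ₋)^{n−n₋} ‖P_{n₋}^+ − P̃_{n₋}^+‖; in particular P_n^+ − P̃_n^+ → 0 as n → ∞. -/

import Mathlib

open scoped RealInnerProductSpace ENNReal
open Filter

noncomputable section

/-- `d`-dimensional Euclidean space `ℝ^d`. -/
abbrev Euc (d : ℕ) := EuclideanSpace ℝ (Fin d)

/-- Bounded linear operators on `ℝ^d` (i.e. `d × d` matrices, with the operator norm). -/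
abbrev Op (d : ℕ) := Euc d →L[ℝ] Euc d

/-- The maximal principal angle between two subspaces of `ℝ^d`,
`∠(V,W) = arccos( min_{v ∈ V, ‖v‖=1} max_{w ∈ W, ‖w‖=1} vᵀw )`. -/
def subAngle {d : ℕ} (V W : Submodule ℝ (Euc d)) : ℝ :=
  Real.arccos (sInf {x : ℝ | ∃ v ∈ V, ‖v‖ = 1 ∧
    x = sSup {y : ℝ | ∃ w ∈ W, ‖w‖ = 1 ∧ y = ⟪v, w⟫}})

/-- `Φ` is the solution operator of `u_{n+1} = A_n u_n` on `J = {n ∈ ℤ : n ≥ n₀}`: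
`Φ(n,n) = I` and `Φ(n+1,m) = A_n Φ(n,m)` (for invertible `A_n` this uniquely
determines `Φ(n,m)` for all `n, m ∈ J`, forward and backward). -/
def IsSolOp {d : ℕ} (n₀ : ℤ) (A : ℤ → Op d) (Φ : ℤ → ℤ → Op d) : Prop :=
  (∀ n : ℤ, n₀ ≤ n → Φ n n = 1) ∧
  (∀ n m : ℤ, n₀ ≤ n → n₀ ≤ m → Φ (n + 1) m = (A n).comp (Φ n m))

/-- The rate `λ^k` of a generalized exponential dichotomy, with the conventions
`0^k = 0` (used for `k ≥ 0`) and `∞^k = 0` (used for `k ≤ 0`). -/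
def dichPow (lam : ℝ≥0∞) (k : ℤ) : ℝ≥0∞ :=
  if lam = 0 ∨ lam = ⊤ then 0 else lam ^ k

/-- Generalized exponential dichotomy (GED) on `J = {n ∈ ℤ : n ≥ n₀}` with data
`(K, λ₊, λ₋, P_n^±)`, where `P_n^- = 1 - P_n^+`: rates `0 ≤ λ₊ < λ₋ ≤ ∞` (the
pair `(0,∞)` excluded), invariant projectors, and the estimates
`‖Φ(n,m)P_m^+‖ ≤ K λ₊^{n−m}` for `n ≥ m`, `‖Φ(n,m)P_m^-‖ ≤ K λ₋^{n−m}` for `n ≤ m`. -/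
def GED {d : ℕ} (n₀ : ℤ) (Φ : ℤ → ℤ → Op d) (K : ℝ) (lamP lamM : ℝ≥0∞)
    (P : ℤ → Op d) : Prop :=
  0 < K ∧ lamP < lamM ∧ ¬(lamP = 0 ∧ lamM = ⊤) ∧
  (∀ n : ℤ, n₀ ≤ n → (P n).comp (P n) = P n) ∧
  (∀ n m : ℤ, n₀ ≤ n → n₀ ≤ m → (P n).comp (Φ n m) = (Φ n m).comp (P m)) ∧
  (∀ n m : ℤ, n₀ ≤ m → m ≤ n →
    (‖(Φ n m).comp (P m)‖₊ : ℝ≥0∞) ≤ ENNReal.ofReal K * dichPow lamP (n - m)) ∧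
  (∀ n m : ℤ, n₀ ≤ n → n ≤ m →
    (‖(Φ n m).comp (1 - P m)‖₊ : ℝ≥0∞) ≤ ENNReal.ofReal K * dichPow lamM (n - m))

/-! For `m ≤ n` the dichotomy estimates of the two GEDs bound
`(1 - P_m) P̃_m = Φ(m,n) (1 - P_n) · Φ(n,m) P̃_m` by `K K̃ (λ₊/λ₋)^{n-m} → 0`, so `P̃_m` has
its range inside that of `P_m`, and symmetrically. Two projectors with the same range satisfy
`P - P̃ = P (P - P̃) (1 - P)`; conjugating by `Φ(n,n₀)` at `n₀` gives
`P_n - P̃_n = Φ(n,n₀) P_{n₀} · (P_{n₀} - P̃_{n₀}) · Φ(n₀,n) (1 - P_n)`, and the two outer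
factors are again bounded by the dichotomy estimates. -/

theorem eq_of_mul_left_recursion {M : Type*} [Monoid M] {n₀ m : ℤ} {a f g : ℤ → M}
    (ha : ∀ n, n₀ ≤ n → IsUnit (a n)) (hm : n₀ ≤ m) (hfg : f m = g m)
    (hf : ∀ n, n₀ ≤ n → f (n + 1) = a n * f n) (hg : ∀ n, n₀ ≤ n → g (n + 1) = a n * g n)
    {n : ℤ} (hn : n₀ ≤ n) : f n = g n := by
  have step : ∀ k, n₀ ≤ k → (f (k + 1) = g (k + 1) ↔ f k = g k) := fun k hk => by
    rw [hf k hk, hg k hk, (ha k hk).mul_right_inj]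
  rcases le_total m n with h | h
  · induction n, h using Int.leInduction with
    | base => exact hfg
    | succ k hk ih => exact (step k (hm.trans hk)).2 (ih (hm.trans hk))
  · induction n, h using Int.leInductionDown with
    | base => exact hfg
    | pred k hk ih => exact (step (k - 1) hn).1 (by simpa using ih (by omega))

theorem ENNReal.div_lt_one_of_lt {a b : ℝ≥0∞} (hab : a < b) : a / b < 1 :=
  ENNReal.div_lt_of_lt_mul (by rwa [one_mul])

theorem ENNReal.tendsto_toReal_div_pow_atTop_nhds_zero {a b : ℝ≥0∞} (hab : a < b) :
    Tendsto (fun k : ℕ => ((a / b) ^ k).toReal) atTop (nhds 0) := by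
  rw [← ENNReal.toReal_zero]
  exact (ENNReal.tendsto_toReal ENNReal.zero_ne_top).comp
    (ENNReal.tendsto_pow_atTop_nhds_zero_of_lt_one (ENNReal.div_lt_one_of_lt hab))

theorem norm_le_mul_toReal_of_nnnorm_le {E : Type*} [SeminormedAddGroup E] {x : E} {K : ℝ}
    {D : ℝ≥0∞} (hK : 0 ≤ K) (hD : D ≠ ⊤) (h : (‖x‖₊ : ℝ≥0∞) ≤ ENNReal.ofReal K * D) :
    ‖x‖ ≤ K * D.toReal := by
  simpa [ENNReal.toReal_mul, ENNReal.toReal_ofReal hK] using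
    ENNReal.toReal_mono (ENNReal.mul_ne_top ENNReal.ofReal_ne_top hD) h

theorem sub_eq_mul_sub_mul_one_sub {R : Type*} [Ring R] {p q : R} (hp : p * p = p)
    (hpq : p * q = q) (hqp : q * p = p) : p - q = p * (p - q) * (1 - p) := by
  rw [mul_sub p, hp, hpq, mul_sub, mul_one, sub_mul, hp, hqp]
  abel

theorem dichPow_ne_top (lam : ℝ≥0∞) (k : ℤ) : dichPow lam k ≠ ⊤ := by
  unfold dichPow
  split_ifs with h
  · exact ENNReal.zero_ne_top
  · rw [not_or] at h
    exact (ENNReal.zpow_lt_top h.1 h.2 k).ne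

theorem dichPow_mul_dichPow_neg_le (lamP lamM : ℝ≥0∞) (k : ℕ) :
    dichPow lamP k * dichPow lamM (-k) ≤ (lamP / lamM) ^ k := by
  by_cases hP : lamP = 0 ∨ lamP = ⊤
  · simp only [dichPow, if_pos hP, zero_mul]
    exact zero_le
  by_cases hM : lamM = 0 ∨ lamM = ⊤
  · simp only [dichPow, if_pos hM, mul_zero]
    exact zero_le
  rw [not_or] at hM
  simp only [dichPow, if_neg hP, if_neg (not_or.mpr hM)]
  rw [zpow_natCast, ENNReal.zpow_neg, zpow_natCast, div_eq_mul_inv, mul_pow,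
    ENNReal.inv_pow]

namespace IsSolOp

variable {d : ℕ} {n₀ : ℤ} {A : ℤ → Op d} {Φ : ℤ → ℤ → Op d}

theorem mul_eq (hA : ∀ n, n₀ ≤ n → IsUnit (A n)) (hΦ : IsSolOp n₀ A Φ) {n m k : ℤ}
    (hn : n₀ ≤ n) (hm : n₀ ≤ m) (hk : n₀ ≤ k) : Φ n m * Φ m k = Φ n k := by
  refine eq_of_mul_left_recursion (f := fun j => Φ j m * Φ m k) (g := fun j => Φ j k)
    hA hm ?_ (fun j hj => ?_) (fun j hj => ?_) hn
  · simp only [hΦ.1 m hm, one_mul]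
  · simp only [hΦ.2 j m hj hm, ContinuousLinearMap.mul_def, ContinuousLinearMap.comp_assoc]
  · simp only [hΦ.2 j k hj hk, ContinuousLinearMap.mul_def]

theorem mul_eq_one (hA : ∀ n, n₀ ≤ n → IsUnit (A n)) (hΦ : IsSolOp n₀ A Φ) {n m : ℤ}
    (hn : n₀ ≤ n) (hm : n₀ ≤ m) : Φ n m * Φ m n = 1 := by
  rw [hΦ.mul_eq hA hn hm hn, hΦ.1 n hn]

end IsSolOp

namespace GED

variable {d : ℕ} {n₀ : ℤ} {A : ℤ → Op d} {Φ : ℤ → ℤ → Op d} {K Kt : ℝ} {lamP lamM : ℝ≥0∞}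
  {P Pt : ℤ → Op d}

theorem proj_mul_eq_mul_proj (hG : GED n₀ Φ K lamP lamM P) {n m : ℤ} (hn : n₀ ≤ n) (hm : n₀ ≤ m) :
    P n * Φ n m = Φ n m * P m :=
  hG.2.2.2.2.1 n m hn hm

theorem one_sub_proj_mul_eq_mul_one_sub_proj (hG : GED n₀ Φ K lamP lamM P) {n m : ℤ}
    (hn : n₀ ≤ n) (hm : n₀ ≤ m) :
    (1 - P n) * Φ n m = Φ n m * (1 - P m) := by
  rw [sub_mul, mul_sub, one_mul, mul_one, hG.proj_mul_eq_mul_proj hn hm]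

theorem proj_eq_conj (hA : ∀ n, n₀ ≤ n → IsUnit (A n)) (hΦ : IsSolOp n₀ A Φ)
    (hG : GED n₀ Φ K lamP lamM P) {n m : ℤ} (hn : n₀ ≤ n) (hm : n₀ ≤ m) :
    P n = Φ n m * P m * Φ m n := by
  rw [← hG.proj_mul_eq_mul_proj hn hm, mul_assoc, hΦ.mul_eq_one hA hn hm, mul_one]

theorem norm_stable_le (hG : GED n₀ Φ K lamP lamM P) {n m : ℤ} (hm : n₀ ≤ m)
    (hmn : m ≤ n) :
    ‖Φ n m * P m‖ ≤ K * (dichPow lamP (n - m)).toReal :=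
  norm_le_mul_toReal_of_nnnorm_le hG.1.le (dichPow_ne_top _ _) (hG.2.2.2.2.2.1 n m hm hmn)

theorem norm_unstable_le (hG : GED n₀ Φ K lamP lamM P) {n m : ℤ} (hn : n₀ ≤ n)
    (hnm : n ≤ m) :
    ‖Φ n m * (1 - P m)‖ ≤ K * (dichPow lamM (n - m)).toReal :=
  norm_le_mul_toReal_of_nnnorm_le hG.1.le (dichPow_ne_top _ _) (hG.2.2.2.2.2.2 n m hn hnm)

theorem norm_unstable_mul_norm_stable_le (hG : GED n₀ Φ K lamP lamM P)
    (hGt : GED n₀ Φ Kt lamP lamM Pt) {n m : ℤ} (hm : n₀ ≤ m) (hmn : m ≤ n) :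
    ‖Φ m n * (1 - P n)‖ * ‖Φ n m * Pt m‖ ≤
      K * Kt * ((lamP / lamM) ^ (n - m).toNat).toReal := by
  obtain ⟨k, rfl⟩ : ∃ k : ℕ, n = m + k := ⟨(n - m).toNat, by omega⟩
  have hK := hG.1.le
  have hKt := hGt.1.le
  calc ‖Φ m (m + k) * (1 - P (m + k))‖ * ‖Φ (m + k) m * Pt m‖
      ≤ K * (dichPow lamM (m - (m + k))).toReal * (Kt * (dichPow lamP (m + k - m)).toReal) :=
        mul_le_mul (hG.norm_unstable_le hm (by omega)) (hGt.norm_stable_le hm (by omega))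
          (norm_nonneg _) (by positivity)
    _ = K * Kt * (dichPow lamP k * dichPow lamM (-k)).toReal := by
        rw [show m - (m + k) = -(k : ℤ) by ring, show m + k - m = (k : ℤ) by ring,
          ENNReal.toReal_mul]
        ring
    _ ≤ K * Kt * ((lamP / lamM) ^ (m + k - m).toNat).toReal := by
        rw [show (m + k - m).toNat = k by omega]
        gcongr
        · exact ENNReal.pow_ne_top (ENNReal.div_lt_one_of_lt hG.2.1).ne_top
        · exact dichPow_mul_dichPow_neg_le lamP lamM k

theorem proj_mul_eq_of_same_rates (hA : ∀ n, n₀ ≤ n → IsUnit (A n)) (hΦ : IsSolOp n₀ A Φ)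
    (hG : GED n₀ Φ K lamP lamM P) (hGt : GED n₀ Φ Kt lamP lamM Pt) {m : ℤ} (hm : n₀ ≤ m) :
    P m * Pt m = Pt m := by
  suffices h : (1 - P m) * Pt m = 0 by rwa [sub_mul, one_mul, sub_eq_zero, eq_comm] at h
  have hfac : ∀ k : ℕ,
      (1 - P m) * Pt m = Φ m (m + k) * (1 - P (m + k)) * (Φ (m + k) m * Pt m) := fun k => by
    calc (1 - P m) * Pt m = (1 - P m) * (Φ m (m + k) * Φ (m + k) m) * Pt m := by
          rw [hΦ.mul_eq_one hA hm (by omega), mul_one]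
      _ = _ := by
          rw [← mul_assoc, hG.one_sub_proj_mul_eq_mul_one_sub_proj hm (by omega)]
          simp only [mul_assoc]
  have hbound : ∀ k : ℕ, ‖(1 - P m) * Pt m‖ ≤ K * Kt * ((lamP / lamM) ^ k).toReal :=
    fun k => by
      rw [hfac k]
      refine (norm_mul_le _ _).trans ?_
      simpa using hG.norm_unstable_mul_norm_stable_le hGt hm (n := m + k) (by omega)
  have hlim := (ENNReal.tendsto_toReal_div_pow_atTop_nhds_zero hG.2.1).const_mul (K * Kt)
  rw [mul_zero] at hlim
  exact norm_le_zero_iff.mp (ge_of_tendsto' hlim hbound)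

theorem norm_proj_sub_proj_le (hA : ∀ n, n₀ ≤ n → IsUnit (A n)) (hΦ : IsSolOp n₀ A Φ)
    (hG : GED n₀ Φ K lamP lamM P) (hGt : GED n₀ Φ Kt lamP lamM Pt) {n : ℤ} (hn : n₀ ≤ n) :
    ‖P n - Pt n‖ ≤ K ^ 2 * ((lamP / lamM) ^ (n - n₀).toNat).toReal * ‖P n₀ - Pt n₀‖ := by
  have h₀ : n₀ ≤ n₀ := le_rfl
  have hsplit : P n₀ - Pt n₀ = P n₀ * (P n₀ - Pt n₀) * (1 - P n₀) :=
    sub_eq_mul_sub_mul_one_sub (hG.2.2.2.1 n₀ h₀) (hG.proj_mul_eq_of_same_rates hA hΦ hGt h₀)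
      (hGt.proj_mul_eq_of_same_rates hA hΦ hG h₀)
  have hfac : P n - Pt n = Φ n n₀ * P n₀ * (P n₀ - Pt n₀) * (Φ n₀ n * (1 - P n)) := by
    calc P n - Pt n = Φ n n₀ * (P n₀ - Pt n₀) * Φ n₀ n := by
          rw [hG.proj_eq_conj hA hΦ hn h₀, hGt.proj_eq_conj hA hΦ hn h₀, mul_sub, sub_mul]
      _ = Φ n n₀ * (P n₀ * (P n₀ - Pt n₀) * (1 - P n₀)) * Φ n₀ n := by rw [← hsplit]
      _ = _ := by
          simp only [mul_assoc, hG.one_sub_proj_mul_eq_mul_one_sub_proj h₀ hn]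
  calc ‖P n - Pt n‖
      ≤ ‖Φ n n₀ * P n₀‖ * ‖P n₀ - Pt n₀‖ * ‖Φ n₀ n * (1 - P n)‖ := by
        rw [hfac]
        exact (norm_mul_le _ _).trans (by gcongr; exact norm_mul_le _ _)
    _ = ‖Φ n₀ n * (1 - P n)‖ * ‖Φ n n₀ * P n₀‖ * ‖P n₀ - Pt n₀‖ := by ring
    _ ≤ K * K * ((lamP / lamM) ^ (n - n₀).toNat).toReal * ‖P n₀ - Pt n₀‖ :=
        mul_le_mul_of_nonneg_right (hG.norm_unstable_mul_norm_stable_le hG h₀ hn)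
          (norm_nonneg _)
    _ = K ^ 2 * ((lamP / lamM) ^ (n - n₀).toNat).toReal * ‖P n₀ - Pt n₀‖ := by ring

end GED

theorem statement5_general {d : ℕ} (n₀ : ℤ) (A : ℤ → Op d) (Φ : ℤ → ℤ → Op d)
    (hA : ∀ n : ℤ, n₀ ≤ n → IsUnit (A n))
    (hΦ : IsSolOp n₀ A Φ)
    (K Kt : ℝ) (lamP lamM : ℝ≥0∞) (P Pt : ℤ → Op d)
    (hGED : GED n₀ Φ K lamP lamM P)
    (hGEDt : GED n₀ Φ Kt lamP lamM Pt) :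
    (∀ n : ℤ, n₀ ≤ n →
      ‖P n - Pt n‖ ≤
        K ^ 2 * ((lamP / lamM) ^ (n - n₀).toNat).toReal * ‖P n₀ - Pt n₀‖) ∧
    Tendsto (fun n : ℤ => P n - Pt n) atTop (nhds 0) := by
  have hbound := fun n (hn : n₀ ≤ n) => hGED.norm_proj_sub_proj_le hA hΦ hGEDt hn
  have htoNat : Tendsto (fun n : ℤ => (n - n₀).toNat) atTop atTop :=
    tendsto_atTop_atTop.mpr fun b => ⟨n₀ + b, fun n hn => by omega⟩
  have hlim : Tendsto (fun n : ℤ =>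
      K ^ 2 * ((lamP / lamM) ^ (n - n₀).toNat).toReal * ‖P n₀ - Pt n₀‖) atTop (nhds 0) := by
    simpa only [Function.comp_def, mul_zero, zero_mul] using
      (((ENNReal.tendsto_toReal_div_pow_atTop_nhds_zero hGED.2.1).comp htoNat).const_mul
        (K ^ 2)).mul_const ‖P n₀ - Pt n₀‖
  exact ⟨hbound, squeeze_zero_norm' (eventually_atTop.mpr ⟨n₀, hbound⟩) hlim⟩

/-- two GEDs with the same rates have exponentially close projectors,
`‖P_n^+ − P̃_n^+‖ ≤ K² (λ₊/λ₋)^{n−n₋} ‖P_{n₋}^+ − P̃_{n₋}^+‖` for `n ∈ J`;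
in particular `P_n^+ − P̃_n^+ → 0` as `n → ∞`. -/
theorem statement5 {d : ℕ} (n₀ : ℤ) (A : ℤ → Op d) (Φ : ℤ → ℤ → Op d)
    (hA : ∀ n : ℤ, n₀ ≤ n → IsUnit (A n))
    (hAbd : ∃ M : ℝ, ∀ n : ℤ, n₀ ≤ n → ‖A n‖ ≤ M ∧ ‖Ring.inverse (A n)‖ ≤ M)
    (hΦ : IsSolOp n₀ A Φ)
    (K Kt : ℝ) (lamP lamM : ℝ≥0∞) (P Pt : ℤ → Op d)
    (hGED : GED n₀ Φ K lamP lamM P)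
    (hGEDt : GED n₀ Φ Kt lamP lamM Pt) :
    (∀ n : ℤ, n₀ ≤ n →
      ‖P n - Pt n‖ ≤
        K ^ 2 * ((lamP / lamM) ^ (n - n₀).toNat).toReal * ‖P n₀ - Pt n₀‖) ∧
    Tendsto (fun n : ℤ => P n - Pt n) atTop (nhds 0) :=
  statement5_general n₀ A Φ hA hΦ K Kt lamP lamM P Pt hGED hGEDt
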